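/- Let $B$ be a positive integer and let $\ell$ be a finite list of natural numbers (the sizes of the light queues stored in a block, in order) such that every element $e$ of $\ell$ satisfies $3e < B$ (each light queue has fewer than $B/3$ elements) and the total sum $S$ of $\ell$ satisfies $S \ge B$ (the block has overflowed). Then there exists a prefix of $\ell$ whose sum $P$ satisfies $B \le 3P$ and $3P < 2B$ (i.e., $B/3 \le P < 2B/3$); moreover the remaining suffix then has sum $S - P$ satisfying $3(S-P) > B$. -/
import Mathlib

theorem split_balance_aux (B : ℕ) :
    ∀ (l : List ℕ) (s : ℕ), (∀ e ∈ l, 3 * e < B) → 3 * s < B →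
      B ≤ 3 * (s + l.sum) →
      ∃ p : List ℕ, p <+: l ∧ B ≤ 3 * (s + p.sum) ∧ 3 * (s + p.sum) < 2 * B := by
  intro l
  induction l with
  | nil => intro s _ hs hfull; simp at hfull; omega
  | cons a t ih =>
    intro s hlight hs hfull
    by_cases h : B ≤ 3 * (s + a)
    · exact ⟨[a], ⟨t, rfl⟩, by simpa using h, by
        have := hlight a (by simp); simp; omega⟩
    · obtain ⟨p, hp, h1, h2⟩ := ih (s + a) (fun e he => hlight e (by simp [he]))
        (by omega) (by simp at hfull ⊢; omega)
      exact ⟨a :: p, ⟨hp.choose, by rw [List.cons_append, hp.choose_spec]⟩, by simpa [add_assoc] using h1,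
        by simpa [add_assoc] using h2⟩


/-- Split-action balance guarantee: if a block holds a list `l` of light queues,
each of size less than `B/3`, and the block has overflowed (total size at least
`B`), then greedily copying whole queues yields a prefix whose total size `P`
satisfies `B/3 ≤ P < 2B/3`, and the remaining suffix then has total size
greater than `B/3`. -/
theorem split_balance (B : ℕ) (hB : 0 < B) (l : List ℕ)
    (hlight : ∀ e ∈ l, 3 * e < B) (hfull : B ≤ l.sum) :
    ∃ p : List ℕ, p <+: l ∧ B ≤ 3 * p.sum ∧ 3 * p.sum < 2 * B ∧
      B < 3 * (l.sum - p.sum) := by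
  obtain ⟨p, hp, h1, h2⟩ := split_balance_aux B l 0 hlight (by omega) (by omega)
  have hle : p.sum ≤ l.sum := hp.sublist.sum_le_sum (fun a _ => Nat.zero_le a)
  exact ⟨p, hp, by omega, by omega, by omega⟩
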